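/- arXiv:1903.02078 — 2 statements merged into one kernel-verified Lean document; each statement's English description precedes it below -/
import Mathlib

section
/- (Theorem 1, case (a).) Suppose V : ℝ^{2n} → ℝ is C¹, nonnegative, radially unbounded (V(x) → ∞ as ‖x‖ → ∞), and satisfies the HJB equation, and suppose Q is continuous and positive definite (Q(0)=0 and Q(x) > 0 for x ≠ 0). Then the origin of the closed-loop system ẋ = F(x) + G(x)u*(x) is globally asymptotically stable: (i) for every ε > 0 there exists δ > 0 such that every closed-loop solution with ‖φ(0)‖ < δ satisfies ‖φ(t)‖ < ε for all t ≥ 0, and (ii) every closed-loop solution satisfies φ(t) → 0 as t → ∞. -/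
/-!
By the HJB equation, the derivative of `V` along the closed loop is `-(Q + u*ᵀ R u*) ≤ -Q`, so `V`
is a strict Lyapunov function with decay rate `Q`. At a global minimiser of the coercive `V` the
derivative vanishes, which forces `Q ≤ 0` there; hence `V` attains its minimum only at the origin,
and sublevel sets of `V` just above `V 0` lie in small balls. This gives stability. For
attractivity: if `V (φ t)` stayed above some `c > V 0`, the trajectory would remain in the compact
set `{c ≤ V ≤ V (φ 0)}`, which avoids the origin, so `Q ≥ μ > 0` there and `V (φ t) ≤ V (φ 0) - μ t`
would eventually drop below `c`.
-/

open Matrix MeasureTheory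

noncomputable section

/-- State space of the second-order plant: `x = (p, q)` with `p, q ∈ ℝⁿ`. -/
abbrev XSp (n : ℕ) := (Fin n → ℝ) × (Fin n → ℝ)

/-- Drift vector field `F(x) = (q, f(x))`. -/
def Fvec {n : ℕ} (f : XSp n → Fin n → ℝ) (x : XSp n) : XSp n := (x.2, f x)

/-- Action of the control effectiveness matrix `G(x) = (0, g(x))` on `u`. -/
def Gapp {n m : ℕ} (g : XSp n → Matrix (Fin n) (Fin m) ℝ) (x : XSp n)
    (u : Fin m → ℝ) : XSp n := (0, (g x).mulVec u)

/-- The `j`-th column of `G(x) = (0, g(x))`. -/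
def Gcol {n m : ℕ} (g : XSp n → Matrix (Fin n) (Fin m) ℝ) (x : XSp n)
    (j : Fin m) : XSp n := (0, fun i => g x i j)

/-- The optimal feedback `u*(x) = -(1/2) R⁻¹ G(x)ᵀ ∇V(x)ᵀ`. -/
def uStar {n m : ℕ} (g : XSp n → Matrix (Fin n) (Fin m) ℝ)
    (R : Matrix (Fin m) (Fin m) ℝ) (V : XSp n → ℝ) (x : XSp n) : Fin m → ℝ :=
  (-(1 / 2 : ℝ)) • R⁻¹.mulVec (fun j => fderiv ℝ V x (Gcol g x j))

/-- `V` satisfies the Hamilton–Jacobi–Bellman equation: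
`∇V(x)·(F(x) + G(x)u*(x)) + Q(x) + u*(x)ᵀ R u*(x) = 0` for all `x`. -/
def SatisfiesHJB {n m : ℕ} (f : XSp n → Fin n → ℝ)
    (g : XSp n → Matrix (Fin n) (Fin m) ℝ) (Q : XSp n → ℝ)
    (R : Matrix (Fin m) (Fin m) ℝ) (V : XSp n → ℝ) : Prop :=
  ∀ x : XSp n,
    fderiv ℝ V x (Fvec f x + Gapp g x (uStar g R V x)) + Q x
      + uStar g R V x ⬝ᵥ R.mulVec (uStar g R V x) = 0

/-- `φ` is a closed-loop solution on `[0,∞)` under the feedback `u`. -/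
def IsClosedLoopSol {n m : ℕ} (f : XSp n → Fin n → ℝ)
    (g : XSp n → Matrix (Fin n) (Fin m) ℝ) (u : XSp n → Fin m → ℝ)
    (φ : ℝ → XSp n) : Prop :=
  ∀ t ∈ Set.Ici (0 : ℝ),
    HasDerivWithinAt φ (Fvec f (φ t) + Gapp g (φ t) (u (φ t))) (Set.Ici 0) t


open Set Filter Topology

lemma antitoneOn_Ici_add_mul_of_hasDerivWithinAt {ψ ψ' : ℝ → ℝ} {a μ : ℝ}
    (hψ : ∀ t ∈ Ici a, HasDerivWithinAt ψ (ψ' t) (Ici a) t) (hle : ∀ t ∈ Ici a, ψ' t ≤ -μ) :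
    AntitoneOn (fun t => ψ t + μ * t) (Ici a) := by
  have hderiv : ∀ t ∈ Ici a,
      HasDerivWithinAt (fun t => ψ t + μ * t) (ψ' t + μ) (Ici a) t := fun t ht => by
    have := (hψ t ht).add ((hasDerivWithinAt_id t (Ici a)).const_mul μ)
    rwa [mul_one] at this
  refine antitoneOn_of_hasDerivWithinAt_nonpos (convex_Ici a) (f' := fun t => ψ' t + μ)
    (fun t ht => (hderiv t ht).continuousWithinAt) (fun t ht => ?_) (fun t ht => ?_)
  · rw [interior_Ici] at ht ⊢
    exact (hderiv t (mem_Ici.2 ht.le)).mono Ioi_subset_Ici_self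
  · rw [interior_Ici] at ht
    linarith [hle t (mem_Ici.2 ht.le)]

lemma isCompact_preimage_Iic_of_tendsto_cocompact {α : Type*} [TopologicalSpace α] {f : α → ℝ}
    (hf : Continuous f) (hlim : Tendsto f (cocompact α) atTop) (b : ℝ) :
    IsCompact (f ⁻¹' Iic b) := by
  obtain ⟨K, hK, hsub⟩ := mem_cocompact.1 (hlim.eventually (eventually_gt_atTop b))
  refine hK.of_isClosed_subset (isClosed_Iic.preimage hf) fun x hx => ?_
  by_contra hxK
  exact (show b < f x from hsub hxK).not_ge hx

section Lyapunov

variable {E : Type*} [NormedAddCommGroup E] [NormedSpace ℝ E]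

def IsForwardSolution (X : E → E) (φ : ℝ → E) : Prop :=
  ∀ t ∈ Ici (0 : ℝ), HasDerivWithinAt φ (X (φ t)) (Ici 0) t

structure IsStrictLyapunovFunction (V W : E → ℝ) (X : E → E) : Prop where
  differentiable : Differentiable ℝ V
  tendsto_cocompact : Tendsto V (cocompact E) atTop
  continuous_rate : Continuous W
  rate_pos : ∀ x ≠ 0, 0 < W x
  fderiv_apply_le : ∀ x ≠ 0, fderiv ℝ V x (X x) ≤ -W x

namespace IsStrictLyapunovFunction

variable {V W : E → ℝ} {X : E → E} {φ : ℝ → E}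

lemma continuous (h : IsStrictLyapunovFunction V W X) : Continuous V :=
  h.differentiable.continuous

lemma eq_zero_of_isLocalMin (h : IsStrictLyapunovFunction V W X) {x : E} (hx : IsLocalMin V x) :
    x = 0 := by
  by_contra hx0
  have hzero : fderiv ℝ V x (X x) = 0 := by simp [hx.fderiv_eq_zero]
  linarith [h.fderiv_apply_le x hx0, h.rate_pos x hx0]

lemma lt_of_ne_zero (h : IsStrictLyapunovFunction V W X) {x : E} (hx : x ≠ 0) : V 0 < V x := by
  obtain ⟨x₀, hx₀⟩ := h.continuous.exists_forall_le h.tendsto_cocompact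
  obtain rfl := h.eq_zero_of_isLocalMin (Eventually.of_forall hx₀)
  refine (hx₀ x).lt_of_ne fun heq => hx (h.eq_zero_of_isLocalMin (Eventually.of_forall ?_))
  exact fun y => heq ▸ hx₀ y

lemma fderiv_apply_nonpos (h : IsStrictLyapunovFunction V W X) (x : E) :
    fderiv ℝ V x (X x) ≤ 0 := by
  rcases eq_or_ne x 0 with rfl | hx
  · have hmin : IsLocalMin V 0 := Eventually.of_forall fun y =>
      (eq_or_ne y 0).elim (fun hy => hy ▸ le_rfl) fun hy => (h.lt_of_ne_zero hy).le
    simp [hmin.fderiv_eq_zero]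
  · linarith [h.fderiv_apply_le x hx, h.rate_pos x hx]

lemma exists_gt_forall_norm_lt (h : IsStrictLyapunovFunction V W X) {ε : ℝ} (hε : 0 < ε) :
    ∃ c > V 0, ∀ x, V x < c → ‖x‖ < ε := by
  rcases eq_empty_or_nonempty {x : E | ε ≤ ‖x‖} with hS | ⟨x₀, hx₀⟩
  · refine ⟨V 0 + 1, by linarith, fun x _ => not_le.1 fun hx => ?_⟩
    exact (hS.subset hx : x ∈ (∅ : Set E))
  obtain ⟨z, hz, hzmin⟩ := h.continuous.continuousOn.exists_isMinOn'
    (isClosed_le continuous_const continuous_norm) hx₀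
    ((h.tendsto_cocompact.eventually (eventually_ge_atTop (V x₀))).filter_mono inf_le_left)
  have hz0 : z ≠ 0 := fun hz0 => by simp [hz0] at hz; linarith
  exact ⟨V z, h.lt_of_ne_zero hz0, fun x hx => not_le.1 fun hεx => (hzmin hεx).not_gt hx⟩

lemma hasDerivWithinAt_comp (h : IsStrictLyapunovFunction V W X) (hφ : IsForwardSolution X φ)
    {t : ℝ} (ht : t ∈ Ici 0) :
    HasDerivWithinAt (fun t => V (φ t)) (fderiv ℝ V (φ t) (X (φ t))) (Ici 0) t :=
  (h.differentiable _).hasFDerivAt.comp_hasDerivWithinAt t (hφ t ht)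

lemma antitoneOn_comp (h : IsStrictLyapunovFunction V W X) (hφ : IsForwardSolution X φ) :
    AntitoneOn (fun t => V (φ t)) (Ici 0) := by
  simpa using antitoneOn_Ici_add_mul_of_hasDerivWithinAt (μ := 0)
    (fun t ht => h.hasDerivWithinAt_comp hφ ht) fun t _ => by simpa using h.fderiv_apply_nonpos _

lemma exists_comp_lt (h : IsStrictLyapunovFunction V W X) (hφ : IsForwardSolution X φ) {c : ℝ}
    (hc : V 0 < c) : ∃ t ≥ 0, V (φ t) < c := by
  by_contra! hge
  set K := V ⁻¹' Icc c (V (φ 0))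
  have hφK : ∀ t ∈ Ici (0 : ℝ), φ t ∈ K := fun t ht =>
    ⟨hge t ht, h.antitoneOn_comp hφ self_mem_Ici ht ht⟩
  have hK : IsCompact K :=
    (isCompact_preimage_Iic_of_tendsto_cocompact h.continuous h.tendsto_cocompact
      (V (φ 0))).of_isClosed_subset (isClosed_Icc.preimage h.continuous) fun x hx => hx.2
  have h0K : (0 : E) ∉ K := fun h0 => h0.1.not_gt hc
  obtain ⟨z, hzK, hzmin⟩ := hK.exists_isMinOn ⟨φ 0, hφK 0 self_mem_Ici⟩
    h.continuous_rate.continuousOn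
  have hμ : 0 < W z := h.rate_pos z (ne_of_mem_of_not_mem hzK h0K)
  have hanti := antitoneOn_Ici_add_mul_of_hasDerivWithinAt (μ := W z)
    (fun t ht => h.hasDerivWithinAt_comp hφ ht) fun t ht => by
      have hφt := hφK t ht
      linarith [h.fderiv_apply_le _ (ne_of_mem_of_not_mem hφt h0K), isMinOn_iff.1 hzmin _ hφt]
  set T := (V (φ 0) - c) / W z + 1
  have hT : 0 ≤ T := add_nonneg (div_nonneg (sub_nonneg.2 (hge 0 le_rfl)) hμ.le) zero_le_one
  have hdecay : V (φ T) + W z * T ≤ V (φ 0) := by simpa using hanti self_mem_Ici hT hT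
  have hWT : W z * T = V (φ 0) - c + W z := by rw [mul_add, mul_div_cancel₀ _ hμ.ne', mul_one]
  linarith [hge T hT]

theorem stable (h : IsStrictLyapunovFunction V W X) {ε : ℝ} (hε : 0 < ε) :
    ∃ δ > 0, ∀ φ : ℝ → E, IsForwardSolution X φ → ‖φ 0‖ < δ → ∀ t ≥ 0, ‖φ t‖ < ε := by
  obtain ⟨c, hc, hcε⟩ := h.exists_gt_forall_norm_lt hε
  obtain ⟨δ, hδ, hδc⟩ := Metric.eventually_nhds_iff.1 ((h.continuous.tendsto 0).eventually
    (gt_mem_nhds hc))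
  refine ⟨δ, hδ, fun φ hφ h0 t ht => hcε _ ?_⟩
  exact (h.antitoneOn_comp hφ self_mem_Ici ht ht).trans_lt (hδc (by rwa [dist_zero_right]))

theorem tendsto_zero (h : IsStrictLyapunovFunction V W X) (hφ : IsForwardSolution X φ) :
    Tendsto φ atTop (𝓝 0) := by
  refine Metric.tendsto_atTop.2 fun ε hε => ?_
  obtain ⟨c, hc, hcε⟩ := h.exists_gt_forall_norm_lt hε
  obtain ⟨t₀, ht₀, hlt⟩ := h.exists_comp_lt hφ hc
  refine ⟨t₀, fun t ht => ?_⟩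
  rw [dist_zero_right]
  exact hcε _ ((h.antitoneOn_comp hφ ht₀ (le_trans ht₀ ht) ht).trans_lt hlt)

end IsStrictLyapunovFunction

end Lyapunov

lemma isStrictLyapunovFunction_of_satisfiesHJB {n m : ℕ} {f : XSp n → Fin n → ℝ}
    {g : XSp n → Matrix (Fin n) (Fin m) ℝ} {Q : XSp n → ℝ} {R : Matrix (Fin m) (Fin m) ℝ}
    {V : XSp n → ℝ} (hQcont : Continuous Q) (hQpos : ∀ x : XSp n, x ≠ 0 → 0 < Q x)
    (hR : R.PosDef) (hV : Differentiable ℝ V) (hVlim : Tendsto V (cocompact _) atTop)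
    (hHJB : SatisfiesHJB f g Q R V) :
    IsStrictLyapunovFunction V Q fun x => Fvec f x + Gapp g x (uStar g R V x) where
  differentiable := hV
  tendsto_cocompact := hVlim
  continuous_rate := hQcont
  rate_pos := hQpos
  fderiv_apply_le x _ := by
    have hRu : 0 ≤ uStar g R V x ⬝ᵥ R *ᵥ uStar g R V x := by
      simpa using hR.posSemidef.dotProduct_mulVec_nonneg (uStar g R V x)
    linarith [hHJB x]

theorem optimal_feedback_GAS_case_a_general
    {n m : ℕ} (f : XSp n → Fin n → ℝ)
    (g : XSp n → Matrix (Fin n) (Fin m) ℝ)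
    (Q : XSp n → ℝ) (hQcont : Continuous Q)
    (hQpos : ∀ x : XSp n, x ≠ 0 → 0 < Q x)
    (R : Matrix (Fin m) (Fin m) ℝ) (hR : R.PosDef)
    (V : XSp n → ℝ) (hV : ContDiff ℝ 1 V)
    (hVrad : ∀ c : ℝ, ∃ r : ℝ, ∀ x : XSp n, r ≤ ‖x‖ → c ≤ V x)
    (hHJB : SatisfiesHJB f g Q R V) :
    (∀ ε > (0 : ℝ), ∃ δ > (0 : ℝ), ∀ φ : ℝ → XSp n,
      IsClosedLoopSol f g (uStar g R V) φ → ‖φ 0‖ < δ →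
        ∀ t ≥ (0 : ℝ), ‖φ t‖ < ε) ∧
    (∀ φ : ℝ → XSp n, IsClosedLoopSol f g (uStar g R V) φ →
      Filter.Tendsto φ Filter.atTop (nhds 0)) := by
  have hVlim : Tendsto V (cocompact _) atTop := tendsto_atTop.2 fun c => by
    obtain ⟨r, hr⟩ := hVrad c
    exact (tendsto_norm_cocompact_atTop.eventually (eventually_ge_atTop r)).mono hr
  have hLyap := isStrictLyapunovFunction_of_satisfiesHJB hQcont hQpos hR
    (hV.differentiable one_ne_zero) hVlim hHJB
  exact ⟨fun ε hε => hLyap.stable hε, fun φ hφ => hLyap.tendsto_zero hφ⟩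

/-- Theorem 1, case (a): if `V` is a nonnegative, radially
unbounded C¹ solution of the HJB equation and `Q` is positive definite, then
the origin of the closed-loop system is globally asymptotically stable. -/
theorem optimal_feedback_GAS_case_a
    {n m : ℕ} (f : XSp n → Fin n → ℝ) (hf : LocallyLipschitz f)
    (hf0 : f 0 = 0)
    (g : XSp n → Matrix (Fin n) (Fin m) ℝ)
    (hg : LocallyLipschitz (fun x i j => g x i j))
    (Q : XSp n → ℝ) (hQcont : Continuous Q)
    (hQ0 : Q 0 = 0) (hQpos : ∀ x : XSp n, x ≠ 0 → 0 < Q x)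
    (R : Matrix (Fin m) (Fin m) ℝ) (hR : R.PosDef)
    (V : XSp n → ℝ) (hV : ContDiff ℝ 1 V)
    (hVnonneg : ∀ x, 0 ≤ V x)
    (hVrad : ∀ c : ℝ, ∃ r : ℝ, ∀ x : XSp n, r ≤ ‖x‖ → c ≤ V x)
    (hHJB : SatisfiesHJB f g Q R V) :
    (∀ ε > (0 : ℝ), ∃ δ > (0 : ℝ), ∀ φ : ℝ → XSp n,
      IsClosedLoopSol f g (uStar g R V) φ → ‖φ 0‖ < δ →
        ∀ t ≥ (0 : ℝ), ‖φ t‖ < ε) ∧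
    (∀ φ : ℝ → XSp n, IsClosedLoopSol f g (uStar g R V) φ →
      Filter.Tendsto φ Filter.atTop (nhds 0)) :=
  optimal_feedback_GAS_case_a_general f g Q hQcont hQpos R hR V hV hVrad hHJB
end
end

section
/- (Bellman error decomposition.) Suppose V : ℝ^{2n} → ℝ is C¹ and satisfies the HJB equation, and let σ : ℝ^{2n} → ℝ^L be C¹, W ∈ ℝ^L, and ε(x) := V(x) - Wᵀσ(x). For W_c, W_a ∈ ℝ^L define the approximate policy û(x,W_a) := -(1/2)R⁻¹G(x)ᵀ∇σ(x)ᵀW_a and the Bellman error δ(x,W_c,W_a) := W_cᵀ∇σ(x)(F(x) + G(x)û(x,W_a)) + Q(x) + û(x,W_a)ᵀR û(x,W_a). Then for every x, δ(x,W_c,W_a) = -ω(x,W_a)ᵀW̃_c + (1/4)W̃_aᵀ G_σ(x) W̃_a + Δ(x), where W̃_c := W - W_c, W̃_a := W - W_a, ω(x,W_a) := ∇σ(x)(F(x) + G(x)û(x,W_a)), Ḡ(x) := G(x)R⁻¹G(x)ᵀ, G_σ(x) := ∇σ(x)Ḡ(x)∇σ(x)ᵀ, and Δ(x) := (1/2)Wᵀ∇σ(x)Ḡ(x)∇ε(x)ᵀ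 + (1/4)∇ε(x)Ḡ(x)∇ε(x)ᵀ - ∇ε(x)F(x). -/
open Matrix MeasureTheory

noncomputable section

/-- Approximate policy `û(x, Wₐ) = -(1/2) R⁻¹ G(x)ᵀ ∇σ(x)ᵀ Wₐ`. -/
def uHat {n m L : ℕ} (g : XSp n → Matrix (Fin n) (Fin m) ℝ)
    (R : Matrix (Fin m) (Fin m) ℝ) (σ : XSp n → Fin L → ℝ)
    (x : XSp n) (Wa : Fin L → ℝ) : Fin m → ℝ :=
  (-(1 / 2 : ℝ)) • R⁻¹.mulVec (fun j => Wa ⬝ᵥ fderiv ℝ σ x (Gcol g x j))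

/-- The vector `G(x)ᵀ ∇σ(x)ᵀ W ∈ ℝᵐ`. -/
def gradSigmaG {n m L : ℕ} (g : XSp n → Matrix (Fin n) (Fin m) ℝ)
    (σ : XSp n → Fin L → ℝ) (x : XSp n) (W : Fin L → ℝ) : Fin m → ℝ :=
  fun j => W ⬝ᵥ fderiv ℝ σ x (Gcol g x j)

/-!
Substitute `Q(x) = (1/4) ∇V Ḡ ∇Vᵀ - ∇V F` from the HJB equation and `∇ε = ∇V - Wᵀ∇σ`. Both
sides of the decomposition then become quadratic forms in `R⁻¹` evaluated on the vectors
`G(x)ᵀ∇V(x)ᵀ`, `G(x)ᵀ∇σ(x)ᵀW`, `G(x)ᵀ∇σ(x)ᵀW_a`, `G(x)ᵀ∇σ(x)ᵀW_c`, plus linear terms along `F(x)`;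
they agree by completing the square, using the symmetry of `R⁻¹`.
-/

open Matrix

def dotProductCLM {ι : Type*} [Fintype ι] (w : ι → ℝ) : (ι → ℝ) →L[ℝ] ℝ :=
  LinearMap.toContinuousLinearMap (dotProductBilin ℝ ℝ w)

theorem fderiv_sub_dotProduct_apply {E ι : Type*} [NormedAddCommGroup E] [NormedSpace ℝ E]
    [Fintype ι] {V : E → ℝ} {σ : E → ι → ℝ} {x : E} (hV : DifferentiableAt ℝ V x)
    (hσ : DifferentiableAt ℝ σ x) (w : ι → ℝ) (v : E) :
    fderiv ℝ (fun y => V y - w ⬝ᵥ σ y) x v = fderiv ℝ V x v - w ⬝ᵥ fderiv ℝ σ x v := by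
  have h : HasFDerivAt (fun y => V y - w ⬝ᵥ σ y)
      (fderiv ℝ V x - (dotProductCLM w).comp (fderiv ℝ σ x)) x :=
    hV.hasFDerivAt.sub ((dotProductCLM w).hasFDerivAt.comp x hσ.hasFDerivAt)
  rw [h.fderiv]
  rfl

section Quadratic

variable {ι K : Type*} [Fintype ι] [CommRing K]

theorem Matrix.IsSymm.dotProduct_mulVec_comm {A : Matrix ι ι K} (hA : A.IsSymm) (a b : ι → K) :
    a ⬝ᵥ A *ᵥ b = b ⬝ᵥ A *ᵥ a := by
  rw [dotProduct_mulVec, ← mulVec_transpose, hA.eq, dotProduct_comm]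

theorem Matrix.smul_inv_mulVec_dotProduct_mulVec [DecidableEq ι] {A : Matrix ι ι K}
    (hA : IsUnit A.det) (c : K) (v : ι → K) :
    (c • A⁻¹ *ᵥ v) ⬝ᵥ A *ᵥ (c • A⁻¹ *ᵥ v) = c ^ 2 * (v ⬝ᵥ A⁻¹ *ᵥ v) := by
  rw [mulVec_smul, mulVec_mulVec, mul_nonsing_inv A hA, one_mulVec, smul_dotProduct,
    dotProduct_smul, dotProduct_comm, smul_eq_mul, smul_eq_mul]
  ring

end Quadratic

section Plant

variable {n m L : ℕ} (g : XSp n → Matrix (Fin n) (Fin m) ℝ)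
  (R : Matrix (Fin m) (Fin m) ℝ) (x : XSp n)

theorem Gapp_eq_sum_smul_Gcol (u : Fin m → ℝ) : Gapp g x u = ∑ j, u j • Gcol g x j := by
  ext i <;> simp [Gapp, Gcol, mulVec, dotProduct, Prod.fst_sum, Prod.snd_sum, mul_comm]

theorem ContinuousLinearMap.apply_Gapp (ℓ : XSp n →L[ℝ] ℝ) (u : Fin m → ℝ) :
    ℓ (Gapp g x u) = u ⬝ᵥ fun j => ℓ (Gcol g x j) := by
  simp [Gapp_eq_sum_smul_Gcol, dotProduct]

theorem dotProduct_fderiv_Gapp (σ : XSp n → Fin L → ℝ) (w : Fin L → ℝ) (u : Fin m → ℝ) :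
    w ⬝ᵥ fderiv ℝ σ x (Gapp g x u) = u ⬝ᵥ gradSigmaG g σ x w :=
  ((dotProductCLM w).comp (fderiv ℝ σ x)).apply_Gapp g x u

theorem gradSigmaG_sub (σ : XSp n → Fin L → ℝ) (w w' : Fin L → ℝ) :
    gradSigmaG g σ x (w - w') = gradSigmaG g σ x w - gradSigmaG g σ x w' := by
  ext j
  simp [gradSigmaG, sub_dotProduct]

theorem uHat_eq_smul (σ : XSp n → Fin L → ℝ) (w : Fin L → ℝ) :
    uHat g R σ x w = (-(1 / 2 : ℝ)) • R⁻¹ *ᵥ gradSigmaG g σ x w :=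
  rfl

end Plant

theorem SatisfiesHJB.cost_eq {n m : ℕ} {f : XSp n → Fin n → ℝ}
    {g : XSp n → Matrix (Fin n) (Fin m) ℝ} {Q V : XSp n → ℝ} {R : Matrix (Fin m) (Fin m) ℝ}
    (hHJB : SatisfiesHJB f g Q R V) (hR : IsUnit R.det) (x : XSp n) :
    Q x = 1 / 4 * ((fun j => fderiv ℝ V x (Gcol g x j)) ⬝ᵥ
      R⁻¹ *ᵥ fun j => fderiv ℝ V x (Gcol g x j)) - fderiv ℝ V x (Fvec f x) := by
  have h := hHJB x
  rw [map_add, ContinuousLinearMap.apply_Gapp, uStar,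
    smul_inv_mulVec_dotProduct_mulVec hR, smul_dotProduct, dotProduct_comm, smul_eq_mul] at h
  linarith

theorem bellman_error_decomposition_general
    {n m L : ℕ} (f : XSp n → Fin n → ℝ)
    (g : XSp n → Matrix (Fin n) (Fin m) ℝ)
    (Q : XSp n → ℝ)
    (R : Matrix (Fin m) (Fin m) ℝ) (hR : R.PosDef)
    (V : XSp n → ℝ) (hV : ContDiff ℝ 1 V)
    (hHJB : SatisfiesHJB f g Q R V)
    (σ : XSp n → Fin L → ℝ) (hσ : ContDiff ℝ 1 σ)
    (W Wc Wa : Fin L → ℝ)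
    (ε : XSp n → ℝ) (hε : ∀ x, ε x = V x - W ⬝ᵥ σ x)
    (δ : XSp n → (Fin L → ℝ) → (Fin L → ℝ) → ℝ)
    (hδ : ∀ x Wc' Wa', δ x Wc' Wa' =
      Wc' ⬝ᵥ fderiv ℝ σ x (Fvec f x + Gapp g x (uHat g R σ x Wa'))
        + Q x + uHat g R σ x Wa' ⬝ᵥ R.mulVec (uHat g R σ x Wa'))
    (ω : XSp n → (Fin L → ℝ) → Fin L → ℝ)
    (hω : ∀ x Wa', ω x Wa' =
      fderiv ℝ σ x (Fvec f x + Gapp g x (uHat g R σ x Wa')))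
    (Δ : XSp n → ℝ)
    (hΔ : ∀ x, Δ x =
      (1 / 2 : ℝ) * (gradSigmaG g σ x W ⬝ᵥ
          R⁻¹.mulVec (fun j => fderiv ℝ ε x (Gcol g x j)))
        + (1 / 4 : ℝ) * ((fun j => fderiv ℝ ε x (Gcol g x j)) ⬝ᵥ
          R⁻¹.mulVec (fun j => fderiv ℝ ε x (Gcol g x j)))
        - fderiv ℝ ε x (Fvec f x)) :
    ∀ x : XSp n,
      δ x Wc Wa =
        -(ω x Wa ⬝ᵥ (W - Wc))
          + (1 / 4 : ℝ) * (gradSigmaG g σ x (W - Wa) ⬝ᵥ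
              R⁻¹.mulVec (gradSigmaG g σ x (W - Wa)))
          + Δ x := by
  intro x
  have hdet : IsUnit R.det := (isUnit_iff_isUnit_det R).mp hR.isUnit
  have hsymm : R⁻¹.IsSymm := (isHermitian_iff_isSymm.mp hR.isHermitian).inv
  have hdε : ∀ v, fderiv ℝ ε x v = fderiv ℝ V x v - W ⬝ᵥ fderiv ℝ σ x v := by
    rw [funext hε]
    exact fderiv_sub_dotProduct_apply (hV.differentiable one_ne_zero x)
      (hσ.differentiable one_ne_zero x) W
  have hdεG : (fun j => fderiv ℝ ε x (Gcol g x j)) =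
      (fun j => fderiv ℝ V x (Gcol g x j)) - gradSigmaG g σ x W :=
    funext fun j => hdε _
  rw [hδ, dotProduct_comm (ω x Wa), hω, hΔ, hdεG, hdε, hHJB.cost_eq hdet x, map_add,
    dotProduct_add, dotProduct_add, dotProduct_fderiv_Gapp, dotProduct_fderiv_Gapp,
    gradSigmaG_sub, gradSigmaG_sub, uHat_eq_smul, smul_inv_mulVec_dotProduct_mulVec hdet]
  set d : Fin m → ℝ := fun j => fderiv ℝ V x (Gcol g x j)
  set s := gradSigmaG g σ x W
  set a := gradSigmaG g σ x Wa
  simp only [mulVec_sub, dotProduct_sub, sub_dotProduct, smul_dotProduct, smul_eq_mul,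
    dotProduct_comm (R⁻¹ *ᵥ _)]
  linear_combination (1 / 4 : ℝ) * hsymm.dotProduct_mulVec_comm a s
    + (1 / 4 : ℝ) * hsymm.dotProduct_mulVec_comm d s

/-- Bellman error decomposition: for `V` a C¹ solution of the
HJB equation, `ε := V - Wᵀσ`, the Bellman error
`δ(x, W_c, W_a) = W_cᵀ∇σ(x)(F(x)+G(x)û) + Q(x) + ûᵀRû` decomposes as
`δ = -ωᵀW̃_c + (1/4)W̃_aᵀG_σW̃_a + Δ`. -/
theorem bellman_error_decomposition
    {n m L : ℕ} (f : XSp n → Fin n → ℝ)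
    (g : XSp n → Matrix (Fin n) (Fin m) ℝ)
    (Q : XSp n → ℝ) (hQcont : Continuous Q)
    (R : Matrix (Fin m) (Fin m) ℝ) (hR : R.PosDef)
    (V : XSp n → ℝ) (hV : ContDiff ℝ 1 V)
    (hHJB : SatisfiesHJB f g Q R V)
    (σ : XSp n → Fin L → ℝ) (hσ : ContDiff ℝ 1 σ)
    (W Wc Wa : Fin L → ℝ)
    (ε : XSp n → ℝ) (hε : ∀ x, ε x = V x - W ⬝ᵥ σ x)
    (δ : XSp n → (Fin L → ℝ) → (Fin L → ℝ) → ℝ)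
    (hδ : ∀ x Wc' Wa', δ x Wc' Wa' =
      Wc' ⬝ᵥ fderiv ℝ σ x (Fvec f x + Gapp g x (uHat g R σ x Wa'))
        + Q x + uHat g R σ x Wa' ⬝ᵥ R.mulVec (uHat g R σ x Wa'))
    (ω : XSp n → (Fin L → ℝ) → Fin L → ℝ)
    (hω : ∀ x Wa', ω x Wa' =
      fderiv ℝ σ x (Fvec f x + Gapp g x (uHat g R σ x Wa')))
    (Δ : XSp n → ℝ)
    (hΔ : ∀ x, Δ x =
      (1 / 2 : ℝ) * (gradSigmaG g σ x W ⬝ᵥ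
          R⁻¹.mulVec (fun j => fderiv ℝ ε x (Gcol g x j)))
        + (1 / 4 : ℝ) * ((fun j => fderiv ℝ ε x (Gcol g x j)) ⬝ᵥ
          R⁻¹.mulVec (fun j => fderiv ℝ ε x (Gcol g x j)))
        - fderiv ℝ ε x (Fvec f x)) :
    ∀ x : XSp n,
      δ x Wc Wa =
        -(ω x Wa ⬝ᵥ (W - Wc))
          + (1 / 4 : ℝ) * (gradSigmaG g σ x (W - Wa) ⬝ᵥ
              R⁻¹.mulVec (gradSigmaG g σ x (W - Wa)))
          + Δ x :=
  bellman_error_decomposition_general f g Q R hR V hV hHJB σ hσ W Wc Wa ε hε δ hδ ω hω Δ hΔ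
end
end
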